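/- arXiv:math/0608027 — 3 statements merged into one kernel-verified Lean document; each statement's English description precedes it below -/
import Mathlib

section
/- Let f be a transcendental entire function that omits a value a ∈ ℂ (i.e., f(z) ≠ a for all z ∈ ℂ), and let D ⊆ ℂ be a simply connected domain with a ∉ D. Then the preimage f⁻¹(D) is disconnected. -/
open Set

open Set Complex

lemma lattice_norm_eq_zero {w : ℂ} (hk : ∃ k : ℤ, w = k * (2 * Real.pi * I))
    (hw : ‖w‖ < 2 * Real.pi) : w = 0 := by
  obtain ⟨k, rfl⟩ := hk
  have hnorm : ‖(k : ℂ) * (2 * Real.pi * I)‖ = |(k : ℝ)| * (2 * Real.pi) := by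
    simp [norm_mul, Complex.norm_intCast, Complex.norm_I, Complex.norm_real,
      abs_of_pos Real.pi_pos]
  rw [hnorm] at hw
  have hpi : (0:ℝ) < 2 * Real.pi := by positivity
  have h1 : |(k:ℝ)| < 1 := by
    by_contra h
    push_neg at h
    nlinarith
  have hk0 : k = 0 := by
    have : ((|k|:ℤ):ℝ) < 1 := by rwa [← Int.cast_abs] at h1
    have h2 : |k| < 1 := by exact_mod_cast this
    rw [abs_lt] at h2; omega
  simp [hk0]

lemma exp_eq_exp_sub_lattice {x y : ℂ} (h : Complex.exp x = Complex.exp y) :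
    ∃ k : ℤ, x - y = k * (2 * Real.pi * I) := by
  obtain ⟨n, hn⟩ := Complex.exp_eq_exp_iff_exists_int.mp h
  exact ⟨n, by rw [hn]; ring⟩

/-- Two continuous logarithms on a preconnected set differ by a constant. -/
lemma lift_sub_const {X : Type*} [TopologicalSpace X] {s : Set X} (hs : IsPreconnected s)
    {α β : X → ℂ} (hα : ContinuousOn α s) (hβ : ContinuousOn β s)
    (h : ∀ x ∈ s, Complex.exp (α x) = Complex.exp (β x))
    {x y : X} (hx : x ∈ s) (hy : y ∈ s) : α x - β x = α y - β y := by
  haveI : PreconnectedSpace s := Subtype.preconnectedSpace hs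
  set d : s → ℂ := fun z => α z - β z with hd_def
  have hd : Continuous d := (hα.restrict.sub hβ.restrict)
  have hlat : ∀ z w : s, ∃ k : ℤ, d z - d w = k * (2 * Real.pi * I) := by
    intro z w
    apply exp_eq_exp_sub_lattice
    simp only [hd_def, Complex.exp_sub, h _ z.2, h _ w.2, div_self (Complex.exp_ne_zero _)]
  have key : ∀ z₀ : s, ∀ᶠ z in nhds z₀, d z = d z₀ := by
    intro z₀
    have hball : d ⁻¹' Metric.ball (d z₀) (2 * Real.pi) ∈ nhds z₀ :=
      (hd.tendsto z₀) (Metric.ball_mem_nhds _ (by positivity))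
    filter_upwards [hball] with z hz
    exact sub_eq_zero.mp
      (lattice_norm_eq_zero (hlat z z₀) (by simpa [dist_eq_norm] using hz))
  set A : Set s := {z | d z = d ⟨x, hx⟩} with hA_def
  have hAopen : IsOpen A := by
    rw [isOpen_iff_mem_nhds]
    intro z₀ hz₀
    filter_upwards [key z₀] with z hz
    rw [hA_def, mem_setOf_eq, hz]; exact hz₀
  have hAclosed : IsClosed A := by
    rw [← isOpen_compl_iff, isOpen_iff_mem_nhds]
    intro z₀ hz₀
    filter_upwards [key z₀] with z hz
    simp only [hA_def, mem_compl_iff, mem_setOf_eq, hz] at hz₀ ⊢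
    exact hz₀
  have := (isClopen_iff.mp ⟨hAclosed, hAopen⟩).resolve_left
    (Nonempty.ne_empty ⟨⟨x, hx⟩, rfl⟩)
  have hyA : (⟨y, hy⟩ : s) ∈ A := this ▸ mem_univ _
  exact hyA.symm

open Set Complex Finset

/-- Continuous logarithm on a compact star-shaped (about `0`) set, for a continuous
nonvanishing function. -/
lemma starLift {E : Type*} [NormedAddCommGroup E] [NormedSpace ℝ E] {K : Set E}
    (hKc : IsCompact K) (hKs : ∀ p ∈ K, ∀ t : ℝ, 0 ≤ t → t ≤ 1 → t • p ∈ K)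
    {F : E → ℂ} (hF : Continuous F) (hF0 : ∀ p ∈ K, F p ≠ 0) :
    ∃ G : E → ℂ, ContinuousOn G K ∧ ∀ p ∈ K, Complex.exp (G p) = F p := by
  rcases K.eq_empty_or_nonempty with hK | hKne
  · exact ⟨0, by simp [hK]⟩
  have h0K : (0 : E) ∈ K := by
    obtain ⟨p, hp⟩ := hKne
    simpa using hKs p hp 0 le_rfl zero_le_one
  -- minimum of ‖F‖ on K
  obtain ⟨p₀, hp₀K, hp₀'⟩ := hKc.exists_isMinOn hKne (hF.norm.continuousOn)
  have hp₀ : ∀ p ∈ K, ‖F p₀‖ ≤ ‖F p‖ := fun p hp => hp₀' hp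
  set m := ‖F p₀‖ with hm_def
  have hm : 0 < m := norm_pos_iff.mpr (hF0 p₀ hp₀K)
  -- uniform continuity
  have huc : UniformContinuousOn F K := hKc.uniformContinuousOn_of_continuous hF.continuousOn
  obtain ⟨δ, hδ, hδ'⟩ := (Metric.uniformContinuousOn_iff.mp huc) m hm
  -- bound on K
  obtain ⟨C, hC⟩ := hKc.isBounded.exists_norm_le
  obtain ⟨n, hn⟩ := exists_nat_gt (max 1 (C / δ))
  have hn1 : 1 ≤ (n:ℝ) := le_of_lt (lt_of_le_of_lt (le_max_left _ _) hn)
  have hn0 : (0:ℝ) < n := by linarith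
  have hstep : ∀ p ∈ K, ‖p‖ / n < δ := by
    intro p hp
    have h1 : ‖p‖ ≤ C := hC p hp
    have h2 : C / δ < n := lt_of_le_of_lt (le_max_right _ _) hn
    rw [div_lt_iff₀ hn0]
    have : C < n * δ := by
      rw [div_lt_iff₀ hδ] at h2; linarith
    linarith
  -- the subdivision points
  set q : ℕ → E → ℂ := fun k p => F (((k : ℝ) / n) • p) with hq_def
  have hmemK : ∀ p ∈ K, ∀ k : ℕ, k ≤ n → ((k:ℝ)/n) • p ∈ K := by
    intro p hp k hk
    exact hKs p hp _ (by positivity) (by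
      rw [div_le_one hn0]; exact_mod_cast hk)
  have hqne : ∀ p ∈ K, ∀ k : ℕ, k ≤ n → q k p ≠ 0 := fun p hp k hk =>
    hF0 _ (hmemK p hp k hk)
  have hqm : ∀ p ∈ K, ∀ k : ℕ, k ≤ n → m ≤ ‖q k p‖ := fun p hp k hk =>
    hp₀ _ (hmemK p hp k hk)
  have hclose : ∀ p ∈ K, ∀ k : ℕ, k + 1 ≤ n → ‖q (k+1) p - q k p‖ < m := by
    intro p hp k hk
    rw [← dist_eq_norm]
    apply hδ' _ (hmemK p hp (k+1) hk) _ (hmemK p hp k (by omega))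
    rw [dist_eq_norm, ← sub_smul, norm_smul]
    have : ((k:ℝ)+1)/n - (k:ℝ)/n = 1/n := by field_simp; ring
    rw [show ((k+1:ℕ):ℝ) = (k:ℝ)+1 by push_cast; ring, this]
    calc |1/(n:ℝ)| * ‖p‖ = ‖p‖ / n := by
          rw [abs_of_pos (by positivity)]; ring
      _ < δ := hstep p hp
  -- ratios lie in the slit plane
  have hsp : ∀ z : ℂ, ‖z - 1‖ < 1 → z ∈ Complex.slitPlane := by
    intro z hz
    rw [Complex.mem_slitPlane_iff]
    left
    have h1 : |(z - 1).re| ≤ ‖z - 1‖ := Complex.abs_re_le_norm _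
    simp only [Complex.sub_re, Complex.one_re] at h1
    have := abs_le.mp h1
    linarith
  have hratio : ∀ p ∈ K, ∀ k : ℕ, k + 1 ≤ n → q (k+1) p / q k p ∈ Complex.slitPlane := by
    intro p hp k hk
    apply hsp
    have hk' : k ≤ n := by omega
    have hne := hqne p hp k hk'
    rw [div_sub_one hne, norm_div, div_lt_one (norm_pos_iff.mpr hne)]
    exact lt_of_lt_of_le (hclose p hp k hk) (hqm p hp k hk')
  -- the lift
  refine ⟨fun p => Complex.log (F 0) +
      ∑ k ∈ Finset.range n, Complex.log (q (k+1) p / q k p), ?_, ?_⟩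
  · apply ContinuousOn.add continuousOn_const
    apply continuousOn_finset_sum
    intro k hk
    rw [Finset.mem_range] at hk
    have hcont : ContinuousOn (fun p => q (k+1) p / q k p) K := by
      apply ContinuousOn.div
      · exact (hF.comp (continuous_const_smul _)).continuousOn
      · exact (hF.comp (continuous_const_smul _)).continuousOn
      · intro p hp; exact hqne p hp k (by omega)
    exact hcont.clog fun p hp => hratio p hp k hk
  · intro p hp
    rw [Complex.exp_add, Complex.exp_sum, Complex.exp_log (hF0 0 h0K)]
    have hterm : ∀ k ∈ Finset.range n,
        Complex.exp (Complex.log (q (k+1) p / q k p)) = q (k+1) p / q k p := by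
      intro k hk
      rw [Finset.mem_range] at hk
      exact Complex.exp_log (div_ne_zero (hqne p hp (k+1) hk) (hqne p hp k (by omega)))
    rw [Finset.prod_congr rfl hterm]
    have htel : ∀ N : ℕ, N ≤ n →
        ∏ k ∈ Finset.range N, (q (k+1) p / q k p) = q N p / q 0 p := by
      intro N
      induction N with
      | zero => intro _; simp [div_self (hqne p hp 0 (Nat.zero_le n))]
      | succ N ih =>
        intro hN
        have h1 : q N p ≠ 0 := hqne p hp N (by omega)
        have h2 : q 0 p ≠ 0 := hqne p hp 0 (Nat.zero_le n)
        rw [Finset.prod_range_succ, ih (by omega)]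
        field_simp
    rw [htel n le_rfl]
    have hq0 : q 0 p = F 0 := by simp [hq_def]
    have hqn : q n p = F p := by
      simp only [hq_def]
      rw [div_self (ne_of_gt hn0), one_smul]
    rw [hq0, hqn, mul_div_cancel₀ _ (hF0 0 h0K)]

/-- A nonvanishing entire function has an entire logarithm. -/
lemma exists_entire_log {f : ℂ → ℂ} (hf : Differentiable ℂ f) (hne : ∀ z, f z ≠ 0) :
    ∃ g : ℂ → ℂ, Differentiable ℂ g ∧ ∀ z, Complex.exp (g z) = f z := by
  have hKs : ∀ R : ℝ, ∀ p ∈ Metric.closedBall (0:ℂ) R, ∀ t : ℝ, 0 ≤ t → t ≤ 1 →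
      t • p ∈ Metric.closedBall (0:ℂ) R := by
    intro R p hp t ht0 ht1
    rw [Metric.mem_closedBall, dist_zero_right] at hp ⊢
    rw [norm_smul]
    calc ‖t‖ * ‖p‖ ≤ 1 * ‖p‖ := by
          apply mul_le_mul_of_nonneg_right _ (norm_nonneg p)
          rwa [Real.norm_eq_abs, _root_.abs_of_nonneg ht0]
      _ = ‖p‖ := one_mul _
      _ ≤ R := hp
  have hGn : ∀ n : ℕ, ∃ G : ℂ → ℂ, ContinuousOn G (Metric.closedBall 0 (n+1)) ∧
      (∀ p ∈ Metric.closedBall (0:ℂ) (n+1), Complex.exp (G p) = f p) ∧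
      G 0 = Complex.log (f 0) := by
    intro n
    obtain ⟨G, hGc, hGe⟩ := starLift (isCompact_closedBall (0:ℂ) (n+1)) (hKs (n+1))
      hf.continuous (fun p _ => hne p)
    have h0m : (0:ℂ) ∈ Metric.closedBall (0:ℂ) (n+1) :=
      Metric.mem_closedBall_self (by positivity)
    refine ⟨fun z => G z - G 0 + Complex.log (f 0), (hGc.sub continuousOn_const).add
      continuousOn_const, fun p hp => ?_, by simp⟩
    rw [Complex.exp_add, Complex.exp_sub, hGe p hp, hGe 0 h0m, Complex.exp_log (hne 0),
      div_mul_cancel₀ _ (hne 0)]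
  choose G hGc hGe hG0 using hGn
  have hsub : ∀ m n : ℕ, m ≤ n →
      Metric.closedBall (0:ℂ) (m+1) ⊆ Metric.closedBall (0:ℂ) (n+1) :=
    fun m n h => Metric.closedBall_subset_closedBall (by exact_mod_cast (by omega : m+1 ≤ n+1))
  have hagree : ∀ m n : ℕ, m ≤ n → ∀ z ∈ Metric.closedBall (0:ℂ) (m+1), G m z = G n z := by
    intro m n hmn z hz
    have h0m : (0:ℂ) ∈ Metric.closedBall (0:ℂ) (m+1) :=
      Metric.mem_closedBall_self (by positivity)
    have := lift_sub_const ((convex_closedBall (0:ℂ) (m+1:ℝ)).isPreconnected)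
      (hGc m) ((hGc n).mono (hsub m n hmn))
      (fun x hx => by rw [hGe m x hx, hGe n x (hsub m n hmn hx)]) hz h0m
    rw [hG0 m, hG0 n, sub_self] at this
    exact sub_eq_zero.mp this
  have hmem : ∀ z : ℂ, z ∈ Metric.closedBall (0:ℂ) (⌊‖z‖⌋₊ + 1) := by
    intro z
    rw [Metric.mem_closedBall, dist_zero_right]
    exact (Nat.lt_floor_add_one ‖z‖).le
  set g : ℂ → ℂ := fun z => G ⌊‖z‖⌋₊ z with hg_def
  have hgG : ∀ n : ℕ, ∀ z ∈ Metric.closedBall (0:ℂ) (n+1), g z = G n z := by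
    intro n z hz
    rcases le_total ⌊‖z‖⌋₊ n with h | h
    · exact hagree _ n h z (hmem z)
    · exact (hagree n _ h z hz).symm
  have hgexp : ∀ z, Complex.exp (g z) = f z := fun z => hGe _ z (hmem z)
  have hgcont : Continuous g := by
    rw [continuous_iff_continuousAt]
    intro z₀
    set n := ⌊‖z₀‖⌋₊
    have hball : Metric.ball (0:ℂ) (n+1) ∈ nhds z₀ :=
      Metric.isOpen_ball.mem_nhds (by
        rw [Metric.mem_ball, dist_zero_right]; exact Nat.lt_floor_add_one ‖z₀‖)
    have hGn_at : ContinuousAt (G n) z₀ :=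
      ((hGc n).mono Metric.ball_subset_closedBall).continuousAt hball
    apply hGn_at.congr
    filter_upwards [hball] with z hz
    exact (hgG n z (Metric.ball_subset_closedBall hz)).symm
  have hgdiff : Differentiable ℂ g := by
    intro z₀
    set w := g z₀ with hw
    set q : ℂ → ℂ := fun z => f z * Complex.exp (-w) with hq_def
    have hq0 : ∀ z, q z ≠ 0 := fun z => mul_ne_zero (hne z) (Complex.exp_ne_zero _)
    have hq1 : q z₀ = 1 := by
      rw [hq_def]
      simp only [← hgexp z₀, ← hw, ← Complex.exp_add, add_neg_cancel, Complex.exp_zero]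
    set h : ℂ → ℂ := fun z => w + Complex.log (q z) with hh_def
    have hqdiff : DifferentiableAt ℂ q z₀ := (hf z₀).mul_const _
    have hhdiff : DifferentiableAt ℂ h z₀ := by
      apply DifferentiableAt.add (differentiableAt_const w)
      exact hqdiff.clog (by rw [hq1]; exact Complex.one_mem_slitPlane)
    have hhexp : ∀ z, Complex.exp (h z) = f z := by
      intro z
      rw [hh_def]
      simp only [Complex.exp_add, Complex.exp_log (hq0 z), hq_def]
      rw [Complex.exp_log (mul_ne_zero (hne z) (Complex.exp_ne_zero _))]
      rw [show Complex.exp w * (f z * Complex.exp (-w)) =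
        f z * (Complex.exp w * Complex.exp (-w)) by ring, ← Complex.exp_add,
        add_neg_cancel, Complex.exp_zero, mul_one]
    have hd0 : g z₀ - h z₀ = 0 := by
      rw [hh_def]
      simp [hq1, Complex.log_one, ← hw]
    have hcont : ContinuousAt (fun z => g z - h z) z₀ :=
      (hgcont.continuousAt).sub hhdiff.continuousAt
    have heq : ∀ᶠ z in nhds z₀, g z = h z := by
      have hball : (fun z => g z - h z) ⁻¹' Metric.ball (0:ℂ) (2 * Real.pi) ∈ nhds z₀ := by
        apply hcont
        exact hd0 ▸ Metric.ball_mem_nhds _ (by positivity)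
      filter_upwards [hball] with z hz
      have hlat : ∃ k : ℤ, g z - h z = k * (2 * Real.pi * Complex.I) :=
        exp_eq_exp_sub_lattice (by rw [hgexp z, hhexp z])
      have hnorm : ‖g z - h z‖ < 2 * Real.pi := by
        simpa [dist_eq_norm] using hz
      exact sub_eq_zero.mp (lattice_norm_eq_zero hlat hnorm)
    exact hhdiff.congr_of_eventuallyEq heq
  exact ⟨g, hgdiff, hgexp⟩


/-- If a transcendental entire function `f` omits a value `a`, and `D` is a simply
connected domain not containing `a`, then `f ⁻¹' D` is disconnected. -/
theorem stmt_0 (f : ℂ → ℂ) (hf : Differentiable ℂ f)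
    (htrans : ¬ ∃ p : Polynomial ℂ, ∀ z, f z = p.eval z)
    (a : ℂ) (ha : a ∉ Set.range f)
    (D : Set ℂ) (hDopen : IsOpen D) (hDne : D.Nonempty) (hDconn : IsConnected D)
    (hDsc : SimplyConnectedSpace D) (haD : a ∉ D) :
    ¬ IsConnected (f ⁻¹' D) := by
  intro hcon
  haveI := hDsc
  set s : Set ℂ := f ⁻¹' D with hs_def
  have hsopen : IsOpen s := hDopen.preimage hf.continuous
  obtain ⟨z₀, hz₀⟩ := hcon.nonempty
  have hfa : ∀ z, f z - a ≠ 0 := by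
    intro z hz
    exact ha ⟨z, sub_eq_zero.mp hz⟩
  obtain ⟨g, hg, hge⟩ := exists_entire_log (hf.sub_const a) hfa
  set c : ℂ := g z₀ + 2 * Real.pi * Complex.I with hc_def
  have hexpc : Complex.exp c = f z₀ - a := by
    rw [hc_def, Complex.exp_add, hge, Complex.exp_two_pi_mul_I, mul_one]
  -- choose a radius r around c whose exp-image stays in D - a
  have hVopen : IsOpen ((fun w => Complex.exp w + a) ⁻¹' D) :=
    hDopen.preimage (Complex.continuous_exp.add continuous_const)
  have hcV : c ∈ (fun w => Complex.exp w + a) ⁻¹' D := by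
    simp only [Set.mem_preimage, hexpc, sub_add_cancel]
    exact hz₀
  obtain ⟨r, hr, hball⟩ := Metric.isOpen_iff.mp hVopen c hcV
  -- main claim: g omits the ball around c
  have claim : ∀ z, r ≤ ‖g z - c‖ := by
    intro z₁
    by_contra hz₁
    push_neg at hz₁
    have hgz₁V : Complex.exp (g z₁) + a ∈ D := by
      apply hball
      rwa [Metric.mem_ball, dist_eq_norm]
    have hz₁s : z₁ ∈ s := by
      have : Complex.exp (g z₁) + a = f z₁ := by rw [hge, sub_add_cancel]
      rwa [this] at hgz₁V
    -- a path from z₀ to z₁ inside s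
    have hpc : IsPathConnected s := (hsopen.isConnected_iff_isPathConnected).mp hcon
    have hJ : JoinedIn s z₀ z₁ := hpc.joinedIn z₀ hz₀ z₁ hz₁s
    set γ := hJ.somePath with hγ_def
    have hγ : ∀ t, γ t ∈ s := hJ.somePath_mem
    set x : D := ⟨f z₀, hz₀⟩ with hx_def
    set y : D := ⟨f z₁, hz₁s⟩ with hy_def
    set L₁ : Path x y := {
      toFun := fun t => ⟨f (γ t), hγ t⟩
      continuous_toFun := (hf.continuous.comp γ.continuous).subtype_mk _
      source' := by simp only [γ.source]; rfl
      target' := by simp only [γ.target]; rfl } with hL₁_def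
    -- the segment path
    set σ : ℝ → ℂ := fun t => c + t • (g z₁ - c) with hσ_def
    have hσcont : Continuous σ := continuous_const.add (continuous_id.smul continuous_const)
    have hσ0 : σ 0 = c := by simp [hσ_def]
    have hσ1 : σ 1 = g z₁ := by simp [hσ_def]
    have hσmem : ∀ t : ℝ, 0 ≤ t → t ≤ 1 → Complex.exp (σ t) + a ∈ D := by
      intro t ht0 ht1
      apply hball
      rw [Metric.mem_ball, dist_eq_norm, hσ_def]
      simp only [add_sub_cancel_left]
      rw [norm_smul, Real.norm_eq_abs, _root_.abs_of_nonneg ht0]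
      calc t * ‖g z₁ - c‖ ≤ 1 * ‖g z₁ - c‖ :=
            mul_le_mul_of_nonneg_right ht1 (norm_nonneg _)
        _ = ‖g z₁ - c‖ := one_mul _
        _ < r := hz₁
    set L₂ : Path x y := {
      toFun := fun t => ⟨Complex.exp (σ t) + a, hσmem t t.2.1 t.2.2⟩
      continuous_toFun := ((Complex.continuous_exp.comp
        (hσcont.comp continuous_subtype_val)).add continuous_const).subtype_mk _
      source' := by
        apply Subtype.ext
        simp only [Icc.coe_zero, hσ0, hexpc, sub_add_cancel, hx_def]
      target' := by
        apply Subtype.ext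
        simp only [Icc.coe_one, hσ1, hge, sub_add_cancel, hy_def] } with hL₂_def
    obtain ⟨H⟩ := SimplyConnectedSpace.paths_homotopic L₁ L₂
    set pr : ℝ → unitInterval := fun u => Set.projIcc 0 1 zero_le_one u with hpr_def
    have hprcont : Continuous pr := continuous_projIcc
    set Fm : ℝ × ℝ → ℂ := fun uv => (H (pr uv.1, pr uv.2) : ℂ) - a with hFm_def
    have hFmcont : Continuous Fm := by
      apply Continuous.sub _ continuous_const
      exact continuous_subtype_val.comp (H.continuous.comp
        ((hprcont.comp continuous_fst).prodMk (hprcont.comp continuous_snd)))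
    have hFmne : ∀ p : ℝ × ℝ, Fm p ≠ 0 := by
      intro p hp
      exact haD ((sub_eq_zero.mp hp) ▸ (H (pr p.1, pr p.2)).2)
    set K : Set (ℝ × ℝ) := Set.Icc (0:ℝ) 1 ×ˢ Set.Icc (0:ℝ) 1 with hK_def
    have hKc : IsCompact K := isCompact_Icc.prod isCompact_Icc
    have hKs : ∀ p ∈ K, ∀ t : ℝ, 0 ≤ t → t ≤ 1 → t • p ∈ K := by
      rintro ⟨u, v⟩ ⟨⟨hu0, hu1⟩, ⟨hv0, hv1⟩⟩ t ht0 ht1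
      exact ⟨⟨mul_nonneg ht0 hu0, mul_le_one₀ ht1 hu0 hu1⟩,
        ⟨mul_nonneg ht0 hv0, mul_le_one₀ ht1 hv0 hv1⟩⟩
    obtain ⟨G, hGc, hGe⟩ := starLift hKc hKs hFmcont (fun p _ => hFmne p)
    -- memberships
    have h01 : (0:ℝ) ∈ Set.Icc (0:ℝ) 1 := Set.left_mem_Icc.mpr zero_le_one
    have h11 : (1:ℝ) ∈ Set.Icc (0:ℝ) 1 := Set.right_mem_Icc.mpr zero_le_one
    have hmemK : ∀ u ∈ Set.Icc (0:ℝ) 1, ∀ v ∈ Set.Icc (0:ℝ) 1, (u, v) ∈ K :=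
      fun u hu v hv => ⟨hu, hv⟩
    have hpr0 : pr 0 = 0 := by rw [hpr_def]; exact Set.projIcc_left _
    have hpr1 : pr 1 = 1 := by rw [hpr_def]; exact Set.projIcc_right _
    -- homotopy boundary values
    have hS0 : (0 : unitInterval) ∈ ({0, 1} : Set unitInterval) := Set.mem_insert _ _
    have hS1 : (1 : unitInterval) ∈ ({0, 1} : Set unitInterval) := by
      exact Set.mem_insert_iff.mpr (Or.inr rfl)
    have hedge0 : ∀ t : unitInterval, H (t, 0) = x := by
      intro t
      have := H.eq_fst t hS0
      rwa [show L₁.toContinuousMap 0 = x from L₁.source] at this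
    have hedge1 : ∀ t : unitInterval, H (t, 1) = y := by
      intro t
      have := H.eq_fst t hS1
      rwa [show L₁.toContinuousMap 1 = y from L₁.target] at this
    -- continuity helpers
    have hGcomp : ∀ u₀ : ℝ, u₀ ∈ Set.Icc (0:ℝ) 1 →
        ContinuousOn (fun v : ℝ => G (u₀, v)) (Set.Icc (0:ℝ) 1) := by
      intro u₀ hu₀
      apply hGc.comp (Continuous.continuousOn (by fun_prop))
      intro v hv
      exact hmemK u₀ hu₀ v hv
    have hGcomp' : ∀ v₀ : ℝ, v₀ ∈ Set.Icc (0:ℝ) 1 →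
        ContinuousOn (fun u : ℝ => G (u, v₀)) (Set.Icc (0:ℝ) 1) := by
      intro v₀ hv₀
      apply hGc.comp (Continuous.continuousOn (by fun_prop))
      intro u hu
      exact hmemK u hu v₀ hv₀
    -- edge computations
    have e1 : G (0, 0) = G (1, 0) := by
      have := lift_sub_const isPreconnected_Icc (hGcomp' 0 h01)
        (continuousOn_const : ContinuousOn (fun _ : ℝ => g z₀) _)
        (fun u hu => by
          rw [hGe _ (hmemK u hu 0 h01), hFm_def]
          simp only [hpr0, hedge0]
          exact (hge z₀).symm) h01 h11
      simpa using this
    have e2 : G (0, 1) = G (1, 1) := by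
      have := lift_sub_const isPreconnected_Icc (hGcomp' 1 h11)
        (continuousOn_const : ContinuousOn (fun _ : ℝ => g z₁) _)
        (fun u hu => by
          rw [hGe _ (hmemK u hu 1 h11), hFm_def]
          simp only [hpr1, hedge1]
          exact (hge z₁).symm) h01 h11
      simpa using this
    have e3 : G (0, 1) - G (0, 0) = g z₁ - g z₀ := by
      have := lift_sub_const isPreconnected_Icc (hGcomp 0 h01)
        (((hg.continuous.comp (γ.continuous.comp hprcont)).continuousOn :
          ContinuousOn (fun v : ℝ => g (γ (pr v))) (Set.Icc (0:ℝ) 1)))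
        (fun v hv => by
          rw [hGe _ (hmemK 0 h01 v hv), hFm_def]
          simp only [hpr0]
          rw [show H ((0 : unitInterval), pr v) = L₁ (pr v) from H.apply_zero _]
          exact (hge (γ (pr v))).symm) h11 h01
      simp only [Function.comp_apply] at this
      rw [hpr1, hpr0, γ.source, γ.target] at this
      linear_combination this
    have e4 : G (1, 1) - G (1, 0) = g z₁ - c := by
      have := lift_sub_const isPreconnected_Icc (hGcomp 1 h11)
        (((hσcont.comp (continuous_subtype_val.comp hprcont)).continuousOn :
          ContinuousOn (fun v : ℝ => σ (pr v)) (Set.Icc (0:ℝ) 1)))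
        (fun v hv => by
          rw [hGe _ (hmemK 1 h11 v hv), hFm_def]
          simp only [hpr1]
          rw [show H ((1 : unitInterval), pr v) = L₂ (pr v) from H.apply_one _]
          exact add_sub_cancel_right _ a) h11 h01
      simp only [Function.comp_apply] at this
      rw [hpr1, hpr0, Set.Icc.coe_one, Set.Icc.coe_zero, hσ0, hσ1] at this
      linear_combination this
    have hfinal : g z₁ - g z₀ = g z₁ - c := by
      rw [← e3, ← e4, e1, e2]
    have hc2 : c = g z₀ := by linear_combination hfinal
    rw [hc_def] at hc2
    exact Complex.two_pi_I_ne_zero (by linear_combination hc2)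
  -- Liouville
  have hgne : ∀ z, g z - c ≠ 0 := by
    intro z hz
    have h1 := claim z
    rw [hz, norm_zero] at h1
    linarith
  -- Liouville: 1/(g - c) is a bounded entire function
  set h : ℂ → ℂ := fun z => (g z - c)⁻¹ with hh_def
  have hhdiff : Differentiable ℂ h := (hg.sub_const c).inv hgne
  have hhbdd : Bornology.IsBounded (Set.range h) := by
    rw [isBounded_iff_forall_norm_le]
    refine ⟨r⁻¹, ?_⟩
    rintro _ ⟨z, rfl⟩
    rw [hh_def]
    simp only [norm_inv]
    exact inv_anti₀ hr (claim z)
  have hconst : ∀ z, f z = f 0 := by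
    intro z
    have h1 : h z = h 0 := hhdiff.apply_eq_apply_of_bounded hhbdd z 0
    have h2 : g z = g 0 := by
      have h1' : (g z - c)⁻¹ = (g 0 - c)⁻¹ := h1
      linear_combination inv_injective h1'
    have := hge z
    rw [h2, hge 0] at this
    linear_combination -this
  exact htrans ⟨Polynomial.C (f 0), fun z => by rw [Polynomial.eval_C, hconst z]⟩
end

section
/- Let g(z) = Σ_{k=1}^{∞} (z/2^k)^{2^k} and fix 0 < ε ≤ 1/8. For n ∈ ℕ and z on the ray A_{j,n} = {r e^{2πij/2^n} : r ≥ (1+ε)2^{n+1}} with (1+ε)2^{n+1} ≤ r ≤ (1+ε)2^{n+2}, and j ∈ {0,...,2^n-1}, one has Re g(z) > 2^{2^n} for all sufficiently large n. -/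
open Real

set_option maxHeartbeats 1000000 in
/-- For `g(z) = Σ_{k≥1}(z/2^k)^{2^k}` and `0 < ε ≤ 1/8`, on the rays
`A_{j,n} = {r e^{2πij/2^n} : r ≥ (1+ε)2^{n+1}}` (restricted to
`(1+ε)2^{n+1} ≤ r ≤ (1+ε)2^{n+2}`) one has `Re g(z) > 2^{2^n}` for large `n`. -/
theorem stmt_11 (ε : ℝ) (hε0 : 0 < ε) (hε : ε ≤ 1 / 8) :
    ∃ N : ℕ, ∀ n ≥ N, ∀ j : ℕ, j < 2 ^ n → ∀ r : ℝ,
      (1 + ε) * 2 ^ (n + 1) ≤ r → r ≤ (1 + ε) * 2 ^ (n + 2) →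
      (∑' k : ℕ,
          (((r : ℂ) * Complex.exp (2 * π * Complex.I * (j : ℂ) / 2 ^ n)) / 2 ^ (k + 1))
            ^ 2 ^ (k + 1)).re
        > 2 ^ 2 ^ n := by
  obtain ⟨M, hM⟩ := pow_unbounded_of_one_lt (1 / ε) (one_lt_two : (1:ℝ) < 2)
  have hMε : 1 ≤ ε * 2 ^ M := by
    rw [div_lt_iff₀ hε0] at hM
    nlinarith
  refine ⟨2 * M + 4, fun n hn j hj r hr1 hr2 => ?_⟩
  have hn4 : 4 ≤ n := by omega
  have hn1 : 1 ≤ n := by omega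
  have hε1 : (1:ℝ) ≤ 1 + ε := by linarith
  set t : ℝ := (1 + ε) ^ 2 ^ (n - 1) with ht_def
  have ht1 : (1:ℝ) < t := one_lt_pow₀ (by linarith) (by positivity)
  have ht0 : (0:ℝ) < t := by linarith
  -- t ≥ n + 1
  have htn : (n : ℝ) + 1 ≤ t := by
    have hnat : n ≤ 2 ^ (n - 1 - M) := by
      have h1 : n - 2 - M < 2 ^ (n - 2 - M) := Nat.lt_two_pow_self
      have h2 : 2 ^ (n - 2 - M) * 2 = 2 ^ (n - 1 - M) := by
        rw [← pow_succ]; congr 1; omega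
      omega
    have h1 : (n : ℝ) ≤ 2 ^ (n - 1 - M) := by exact_mod_cast hnat
    have h2 : (2:ℝ) ^ (n - 1 - M) ≤ ε * 2 ^ (n - 1) := by
      have hsplit : (2:ℝ) ^ (n - 1) = 2 ^ M * 2 ^ (n - 1 - M) := by
        rw [← pow_add]; congr 1; omega
      rw [hsplit]
      nlinarith [pow_pos (two_pos : (0:ℝ) < 2) (n - 1 - M)]
    have hber : 1 + (2 ^ (n - 1) : ℕ) * ε ≤ t :=
      one_add_mul_le_pow (by linarith) (2 ^ (n - 1))
    push_cast at hber
    nlinarith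
  have hr0 : (0:ℝ) < r := by
    have : (0:ℝ) < (1 + ε) * 2 ^ (n + 1) := by positivity
    linarith
  set ω : ℂ := Complex.exp (2 * π * Complex.I * (j : ℂ) / 2 ^ n) with hω_def
  set f : ℕ → ℂ := fun k => (((r : ℂ) * ω) / 2 ^ (k + 1)) ^ 2 ^ (k + 1) with hf_def
  -- ω^(2^m) = 1 for m ≥ n
  have hω1 : ∀ m : ℕ, n ≤ m → ω ^ 2 ^ m = 1 := by
    intro m hm
    rw [hω_def, ← Complex.exp_nat_mul]
    have h2n : ((2:ℂ) ^ n) ≠ 0 := pow_ne_zero _ two_ne_zero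
    have heq : ((2 ^ m : ℕ) : ℂ) * (2 * π * Complex.I * (j : ℂ) / 2 ^ n)
        = ((j * 2 ^ (m - n) : ℕ) : ℂ) * (2 * π * Complex.I) := by
      have h2 : (2:ℂ) ^ m = 2 ^ n * 2 ^ (m - n) := by rw [← pow_add]; congr 1; omega
      push_cast
      rw [h2]
      field_simp
    rw [heq, Complex.exp_nat_mul_two_pi_mul_I]
  have hωnorm : ‖ω‖ = 1 := by
    have heq : 2 * (π:ℂ) * Complex.I * (j:ℂ) / 2 ^ n
        = ((2 * π * j / 2 ^ n : ℝ) : ℂ) * Complex.I := by push_cast; ring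
    rw [hω_def, heq, Complex.norm_exp_ofReal_mul_I]
  have hfnorm : ∀ k, ‖f k‖ = (r / 2 ^ (k + 1)) ^ 2 ^ (k + 1) := by
    intro k
    rw [hf_def]
    simp only [norm_pow, norm_div, norm_mul, hωnorm, mul_one, Complex.norm_real, Real.norm_eq_abs,
      abs_of_pos hr0]
    norm_num
  -- summability
  have hsum : Summable f := by
    obtain ⟨K, hK⟩ := pow_unbounded_of_one_lt r (one_lt_two : (1:ℝ) < 2)
    apply Summable.of_norm_bounded_eventually_nat (g := fun k => (1/2 : ℝ) ^ (k + 1))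
    · have : Summable fun k : ℕ => (1/2 : ℝ) ^ k :=
        summable_geometric_of_lt_one (by norm_num) (by norm_num)
      simpa [pow_succ'] using this.mul_left (1/2 : ℝ)
    · filter_upwards [Filter.eventually_ge_atTop K] with k hk
      have h1 : r / 2 ^ (k + 1) ≤ 1 / 2 := by
        rw [div_le_div_iff₀ (by positivity) (by norm_num)]
        have : (2:ℝ) ^ K ≤ 2 ^ k := pow_le_pow_right₀ (by norm_num) hk
        have h2 : (2:ℝ) ^ (k+1) = 2 ^ k * 2 := pow_succ 2 k
        nlinarith
      have h0 : 0 ≤ r / 2 ^ (k + 1) := by positivity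
      rw [hfnorm k]
      calc (r / 2 ^ (k+1)) ^ 2 ^ (k+1) ≤ (1/2 : ℝ) ^ 2 ^ (k+1) :=
            pow_le_pow_left₀ h0 h1 _
        _ ≤ (1/2 : ℝ) ^ (k + 1) :=
            pow_le_pow_of_le_one (by norm_num) (by norm_num)
              (Nat.le_of_lt (Nat.lt_two_pow_self))
  set a : ℕ → ℝ := fun k => (f k).re with ha_def
  have hsa : Summable a := ⟨_, Complex.hasSum_re hsum.hasSum⟩
  have hre : (∑' k, f k).re = ∑' k, a k := Complex.re_tsum hsum
  -- real form of later terms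
  have hreal : ∀ k, n - 1 ≤ k → a k = (r / 2 ^ (k + 1)) ^ 2 ^ (k + 1) := by
    intro k hk
    have hfk : f k = (((r / 2 ^ (k + 1)) ^ 2 ^ (k + 1) : ℝ) : ℂ) := by
      have h1 : f k = (((r / 2 ^ (k+1) : ℝ)) : ℂ) ^ 2 ^ (k+1) * ω ^ 2 ^ (k+1) := by
        rw [hf_def]
        push_cast
        ring
      rw [h1, hω1 (k + 1) (by omega), mul_one, ← Complex.ofReal_pow]
    show (f k).re = _
    rw [hfk, Complex.ofReal_re]
  have habs : ∀ k, |a k| ≤ (r / 2 ^ (k + 1)) ^ 2 ^ (k + 1) := fun k =>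
    (Complex.abs_re_le_norm _).trans_eq (hfnorm k)
  -- s := r / 2^n
  set s : ℝ := r / 2 ^ n with hs_def
  have hs2 : 2 * (1 + ε) ≤ s := by
    rw [hs_def, le_div_iff₀ (by positivity)]
    have h : (2:ℝ) ^ (n + 1) = 2 ^ n * 2 := pow_succ 2 n
    nlinarith
  have hs0 : (0:ℝ) < s := by nlinarith
  -- key bound on early terms
  have hb : ∀ k, k < n - 1 → (r / 2 ^ (k + 1)) ^ 2 ^ (k + 1) * t ≤ s ^ 2 ^ n := by
    intro k hk
    set m := k + 1 with hm_def
    have hm1 : m ≤ n - 1 := by omega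
    have hrk : r / 2 ^ m = s * 2 ^ (n - m) := by
      have h2 : (2:ℝ) ^ n = 2 ^ m * 2 ^ (n - m) := by rw [← pow_add]; congr 1; omega
      rw [hs_def, h2]
      field_simp
    set d := 2 ^ n - 2 ^ m with hd_def
    have hmn : 2 ^ m ≤ 2 ^ (n-1) := Nat.pow_le_pow_right (by norm_num) hm1
    have hn2 : 2 ^ n = 2 ^ (n-1) + 2 ^ (n-1) := by
      have : 2 ^ ((n-1)+1) = 2 ^ (n-1) * 2 := pow_succ 2 (n-1)
      have hnn : (n-1) + 1 = n := by omega
      rw [hnn] at this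
      omega
    have hd1 : 2 ^ (n - 1) ≤ d := by omega
    have hd2 : (n - m) * 2 ^ m ≤ d := by
      have h1 : n - m + 1 ≤ 2 ^ (n - m) := Nat.lt_two_pow_self
      have h4 : 2 ^ (n - m) * 2 ^ m = 2 ^ n := by rw [← pow_add]; congr 1; omega
      have h6 : (n - m) * 2 ^ m + 2 ^ m ≤ 2 ^ n := by
        calc (n - m) * 2 ^ m + 2 ^ m = (n - m + 1) * 2 ^ m := by ring
          _ ≤ 2 ^ (n - m) * 2 ^ m := Nat.mul_le_mul_right _ h1
          _ = 2 ^ n := h4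
      exact Nat.le_sub_of_add_le h6
    have hsplit : s ^ 2 ^ n = s ^ 2 ^ m * s ^ d := by
      rw [← pow_add]; congr 1; omega
    have hbk : (r / 2 ^ m) ^ 2 ^ m = s ^ 2 ^ m * 2 ^ ((n - m) * 2 ^ m) := by
      rw [hrk, mul_pow, ← pow_mul]
    rw [hbk, hsplit]
    have hsm : (0:ℝ) < s ^ 2 ^ m := pow_pos hs0 _
    rw [mul_assoc, mul_le_mul_iff_right₀ hsm]
    have h2d : (2:ℝ) ^ ((n - m) * 2 ^ m) ≤ 2 ^ d := pow_le_pow_right₀ (by norm_num) hd2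
    have htd : t ≤ (1 + ε) ^ d := pow_le_pow_right₀ hε1 hd1
    have hsd : (2:ℝ) ^ d * (1 + ε) ^ d ≤ s ^ d := by
      rw [← mul_pow]
      exact pow_le_pow_left₀ (by positivity) hs2 _
    calc (2:ℝ) ^ ((n - m) * 2 ^ m) * t ≤ 2 ^ d * (1 + ε) ^ d :=
          mul_le_mul h2d htd ht0.le (by positivity)
      _ ≤ s ^ d := hsd
  -- a (n-1) = s ^ 2^n
  have han : a (n - 1) = s ^ 2 ^ n := by
    rw [hreal (n-1) le_rfl]
    have : (n - 1) + 1 = n := by omega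
    rw [this, hs_def]
  -- lower bound on a (n-1)
  have hA : 2 ^ 2 ^ n * t ^ 2 ≤ s ^ 2 ^ n := by
    have h1 : (2 * (1 + ε)) ^ 2 ^ n ≤ s ^ 2 ^ n := pow_le_pow_left₀ (by positivity) hs2 _
    have h2 : ((2:ℝ) * (1 + ε)) ^ 2 ^ n = 2 ^ 2 ^ n * (1 + ε) ^ 2 ^ n := mul_pow _ _ _
    have h3 : ((1:ℝ) + ε) ^ 2 ^ n = t ^ 2 := by
      rw [ht_def, ← pow_mul]
      congr 1
      have hnn : n - 1 + 1 = n := Nat.sub_add_cancel hn1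
      conv_lhs => rw [← hnn, pow_succ]
    rw [h3] at h2
    linarith
  -- assemble
  rw [hre]
  have hsplit := hsa.sum_add_tsum_nat_add n
  have htail : 0 ≤ ∑' i, a (i + n) := by
    apply tsum_nonneg
    intro i
    rw [hreal (i + n) (by omega)]
    positivity
  have hhead : ∑ k ∈ Finset.range n, a k ≥ s ^ 2 ^ n - (n - 1 : ℕ) * (s ^ 2 ^ n / t) := by
    have hn' : n = (n - 1) + 1 := by omega
    rw [hn', Finset.sum_range_succ, ← hn', han]
    have hbound : ∀ k ∈ Finset.range (n - 1), -(s ^ 2 ^ n / t) ≤ a k := by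
      intro k hk
      rw [Finset.mem_range] at hk
      have h1 := habs k
      have h2 := hb k hk
      have h3 : (r / 2 ^ (k + 1)) ^ 2 ^ (k + 1) ≤ s ^ 2 ^ n / t := by
        rw [le_div_iff₀ ht0]; linarith
      have := neg_abs_le (a k)
      linarith
    have hsum1 : -(((n - 1 : ℕ) : ℝ) * (s ^ 2 ^ n / t)) ≤ ∑ k ∈ Finset.range (n-1), a k := by
      calc -(((n - 1 : ℕ) : ℝ) * (s ^ 2 ^ n / t))
          = ∑ _k ∈ Finset.range (n-1), -(s ^ 2 ^ n / t) := by
            rw [Finset.sum_const, Finset.card_range, nsmul_eq_mul]; ring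
        _ ≤ ∑ k ∈ Finset.range (n-1), a k := Finset.sum_le_sum hbound
    linarith
  have hfin : (2:ℝ) ^ 2 ^ n < s ^ 2 ^ n - (n - 1 : ℕ) * (s ^ 2 ^ n / t) := by
    set u : ℝ := s ^ 2 ^ n / t with hu_def
    have hu0 : 0 < u := by positivity
    have hut : s ^ 2 ^ n = u * t := by rw [hu_def]; field_simp
    have hcast : ((n - 1 : ℕ) : ℝ) = (n : ℝ) - 1 := by
      rw [Nat.cast_sub hn1]; norm_num
    have hc0 : (0:ℝ) < 2 ^ 2 ^ n := by positivity
    have hu_ge : 2 ^ 2 ^ n * t ≤ u := by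
      rw [hu_def, le_div_iff₀ ht0]
      calc (2:ℝ) ^ 2 ^ n * t * t = 2 ^ 2 ^ n * t ^ 2 := by ring
        _ ≤ s ^ 2 ^ n := hA
    rw [hut, hcast]
    have h1 : (2:ℝ) ≤ t - ((n:ℝ) - 1) := by linarith
    have h2 : u * 2 ≤ u * (t - ((n:ℝ) - 1)) :=
      mul_le_mul_of_nonneg_left h1 hu0.le
    have h3 : (2:ℝ) ^ 2 ^ n ≤ 2 ^ 2 ^ n * t := by nlinarith
    linarith
  have : (2:ℝ) ^ 2 ^ n < ∑' k, a k := by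
    rw [← hsplit]
    linarith
  linarith
end

section
/- Define h_n(t) = cos((1 + t/2)π) + (1 - 2ε + 3εt)^{2^n} cos(tπ) for t ∈ [0,1], where 0 < ε ≤ 1/8. Let δ = -cos(11π/8)/2 > 0. Then for all sufficiently large n, h_n(t) ≤ -2δ for every t ∈ [0,1]. -/
open Real

set_option maxHeartbeats 1600000 in
/-- With `h_n(t) = cos((1+t/2)π) + (1-2ε+3εt)^{2^n} cos(tπ)` and
`δ = -cos(11π/8)/2`, one has `δ > 0` and `h_n(t) ≤ -2δ` on `[0,1]` for all
sufficiently large `n`. -/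
theorem stmt_14 (ε : ℝ) (hε0 : 0 < ε) (hε : ε ≤ 1 / 8) :
    0 < -Real.cos (11 * π / 8) / 2 ∧
    ∃ N : ℕ, ∀ n ≥ N, ∀ t ∈ Set.Icc (0 : ℝ) 1,
      Real.cos ((1 + t / 2) * π) + (1 - 2 * ε + 3 * ε * t) ^ 2 ^ n * Real.cos (t * π)
        ≤ -2 * (-Real.cos (11 * π / 8) / 2) := by
  have hπ := Real.pi_pos
  have h118 : Real.cos (11 * π / 8) = -Real.cos (3 * π / 8) := by
    rw [show (11 * π / 8) = 3 * π / 8 + π by ring, Real.cos_add_pi]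
  have hK : 0 < Real.cos (3 * π / 8) := by
    apply Real.cos_pos_of_mem_Ioo
    constructor <;> nlinarith
  have hKlt : Real.cos (3 * π / 8) < Real.cos (π / 4) := by
    apply Real.cos_lt_cos_of_nonneg_of_le_pi <;> nlinarith
  constructor
  · rw [h118]; linarith
  have hbase : (0:ℝ) ≤ 1 - ε / 2 := by linarith
  have hbase1 : (1 - ε / 2 : ℝ) < 1 := by linarith
  obtain ⟨N, hN⟩ := exists_pow_lt_of_lt_one
    (sub_pos.mpr hKlt : (0:ℝ) < Real.cos (π / 4) - Real.cos (3 * π / 8)) hbase1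
  refine ⟨N, fun n hn t ht => ?_⟩
  obtain ⟨ht0, ht1⟩ := ht
  have hcoseq : Real.cos ((1 + t / 2) * π) = -Real.cos (t * π / 2) := by
    rw [show (1 + t / 2) * π = t * π / 2 + π by ring, Real.cos_add_pi]
  rw [hcoseq, h118]
  have h2n : N ≤ 2 ^ n := le_trans hn (Nat.lt_two_pow_self (n := n)).le
  rcases le_or_gt t (1 / 2) with h12 | h12
  · -- Case A : 0 ≤ t ≤ 1/2
    have hA : t * π ≤ (1/2 : ℝ) * π := mul_le_mul_of_nonneg_right h12 hπ.le
    have hA0 : (0 : ℝ) * π ≤ t * π := mul_le_mul_of_nonneg_right ht0 hπ.le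
    have h1 : Real.cos (π / 4) ≤ Real.cos (t * π / 2) :=
      Real.cos_le_cos_of_nonneg_of_le_pi (by linarith) (by linarith) (by linarith)
    have hr0 : (0:ℝ) ≤ 1 - 2 * ε + 3 * ε * t := by nlinarith
    have hr1 : 1 - 2 * ε + 3 * ε * t ≤ 1 - ε / 2 := by nlinarith
    have hp : (1 - 2 * ε + 3 * ε * t) ^ 2 ^ n ≤ (1 - ε / 2) ^ 2 ^ n :=
      pow_le_pow_left₀ hr0 hr1 _
    have hp2 : (1 - ε / 2) ^ 2 ^ n ≤ (1 - ε / 2) ^ N :=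
      pow_le_pow_of_le_one hbase hbase1.le h2n
    have hcos1 : Real.cos (t * π) ≤ 1 := Real.cos_le_one _
    have hpnn : (0:ℝ) ≤ (1 - 2 * ε + 3 * ε * t) ^ 2 ^ n := pow_nonneg hr0 _
    nlinarith [mul_le_mul_of_nonneg_left hcos1 hpnn]
  rcases le_or_gt t (3 / 4) with h34 | h34
  · -- Case B : 1/2 < t ≤ 3/4
    have hA : (1/2 : ℝ) * π ≤ t * π := mul_le_mul_of_nonneg_right h12.le hπ.le
    have hB : t * π ≤ (3/4 : ℝ) * π := mul_le_mul_of_nonneg_right h34 hπ.le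
    have h1 : Real.cos (3 * π / 8) ≤ Real.cos (t * π / 2) :=
      Real.cos_le_cos_of_nonneg_of_le_pi (by linarith) (by linarith) (by linarith)
    have h2 : Real.cos (t * π) ≤ 0 :=
      Real.cos_nonpos_of_pi_div_two_le_of_le (by linarith) (by linarith)
    have hr0 : (0:ℝ) ≤ 1 - 2 * ε + 3 * ε * t := by nlinarith
    have hpnn : (0:ℝ) ≤ (1 - 2 * ε + 3 * ε * t) ^ 2 ^ n := pow_nonneg hr0 _
    nlinarith [mul_nonpos_of_nonneg_of_nonpos hpnn h2]
  · -- Case C : 3/4 < t ≤ 1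
    have hA : (3/4 : ℝ) * π ≤ t * π := mul_le_mul_of_nonneg_right h34.le hπ.le
    have hB : t * π ≤ (1 : ℝ) * π := mul_le_mul_of_nonneg_right ht1 hπ.le
    have h1 : (0:ℝ) ≤ Real.cos (t * π / 2) :=
      Real.cos_nonneg_of_mem_Icc ⟨by linarith, by linarith⟩
    have h2 : Real.cos (t * π) ≤ Real.cos (3 * π / 4) :=
      Real.cos_le_cos_of_nonneg_of_le_pi (by linarith) (by linarith) (by linarith)
    have h34eq : Real.cos (3 * π / 4) = -Real.cos (π / 4) := by
      rw [show (3 * π / 4) = π - π / 4 by ring, Real.cos_pi_sub]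
    have hr1 : (1:ℝ) ≤ 1 - 2 * ε + 3 * ε * t := by
      have := mul_le_mul_of_nonneg_left h34.le (by linarith : (0:ℝ) ≤ 3 * ε)
      linarith
    have hp1 : (1:ℝ) ≤ (1 - 2 * ε + 3 * ε * t) ^ 2 ^ n := one_le_pow₀ hr1
    have hcn : Real.cos (t * π) ≤ 0 := by rw [h34eq] at h2; linarith
    have hmm := mul_le_mul_of_nonpos_right hp1 hcn
    rw [h34eq] at h2
    linarith
end
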